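/- arXiv:2310.17351 — 6 statements merged into one kernel-verified Lean document; each statement's English description precedes it below -/
import Mathlib

section
/- Let f₀, f₃, f₄, …, f_{n+3} be vectors in a real inner product space whose Gram matrix is γ(f₀, f₃, …, f_{n+3}) = J (the all-ones matrix) except that the diagonal entries corresponding to f_k (k ≥ 3) are 1 + a_k², i.e. (f₀,f₀)=1, (f_i,f_j)=1 for i≠j, and (f_k,f_k)=1+a_k² for k=3,…,n+3 with all a_k ≠ 0. Then the squared distance of f₀ from Vₙ = span(f₃,…,f_{n+3}) equals (1 + Σ_{k=3}^{n+3} 1/a_k²)⁻¹. -/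
open scoped RealInnerProductSpace

/-- If `(f₀,f₀) = 1`, `(f_i,f_j) = 1` for `i ≠ j`, and `(f_k,f_k) = 1 + a_k²`
with all `a_k ≠ 0`, then the squared distance of `f₀` from the span of the `f_k`
equals `(1 + ∑_k 1/a_k²)⁻¹`. -/
theorem sq_dist_ones_gram {H : Type*} [NormedAddCommGroup H] [InnerProductSpace ℝ H]
    (n : ℕ) (f₀ : H) (f : Fin (n + 1) → H) (a : Fin (n + 1) → ℝ)
    (ha : ∀ k, a k ≠ 0)
    (h00 : ⟪f₀, f₀⟫ = 1) (h0k : ∀ k, ⟪f₀, f k⟫ = 1)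
    (hne : ∀ i j, i ≠ j → ⟪f i, f j⟫ = 1)
    (hkk : ∀ k, ⟪f k, f k⟫ = 1 + (a k) ^ 2) :
    (Metric.infDist f₀ (Submodule.span ℝ (Set.range f) : Set H)) ^ 2 =
      (1 + ∑ k, ((a k) ^ 2)⁻¹)⁻¹ := by
  set T : ℝ := ∑ k, ((a k) ^ 2)⁻¹ with hT
  have hTpos : 0 < T := by
    apply Finset.sum_pos
    · intro k _
      have := ha k
      positivity
    · exact Finset.univ_nonempty
  have h1T : (1 : ℝ) + T ≠ 0 := by linarith
  set c : Fin (n + 1) → ℝ := fun k => ((a k) ^ 2)⁻¹ * (1 + T)⁻¹ with hc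
  set g : H := ∑ k, c k • f k with hg
  set K : Submodule ℝ H := Submodule.span ℝ (Set.range f) with hK
  have hgK : g ∈ K := by
    apply Submodule.sum_mem
    intro k _
    exact Submodule.smul_mem _ _ (Submodule.subset_span ⟨k, rfl⟩)
  -- sum of c equals T/(1+T)
  have hsumc : ∑ k, c k = T * (1 + T)⁻¹ := by
    rw [hc, ← Finset.sum_mul]
  -- orthogonality to each f i
  have horth : ∀ i, ⟪f₀ - g, f i⟫ = 0 := by
    intro i
    have hgi : ⟪g, f i⟫ = ∑ k, c k * ⟪f k, f i⟫ := by
      rw [hg, sum_inner]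
      simp [real_inner_smul_left]
    have : ∑ k, c k * ⟪f k, f i⟫ = (∑ k, c k) + c i * (a i) ^ 2 := by
      have : ∀ k, c k * ⟪f k, f i⟫ = c k + (if k = i then c i * (a i) ^ 2 else 0) := by
        intro k
        by_cases hki : k = i
        · subst hki; rw [hkk]; simp; ring
        · rw [hne k i hki]; simp [hki]
      rw [Finset.sum_congr rfl fun k _ => this k, Finset.sum_add_distrib]
      simp
    have hcia : c i * (a i) ^ 2 = (1 + T)⁻¹ := by
      rw [hc]
      have := pow_ne_zero 2 (ha i)
      field_simp
      exact div_self (ha i)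
    rw [inner_sub_left, h0k, hgi, this, hsumc, hcia]
    field_simp
    ring
  have horthK : ∀ w ∈ K, ⟪f₀ - g, w⟫ = 0 := by
    intro w hw
    induction hw using Submodule.span_induction with
    | mem x hx => obtain ⟨i, rfl⟩ := hx; exact horth i
    | zero => simp
    | add x y _ _ hx hy => rw [inner_add_right, hx, hy]; ring
    | smul r x _ hx => rw [real_inner_smul_right, hx]; ring
  have hdist : Metric.infDist f₀ (K : Set H) = ‖f₀ - g‖ := by
    rw [Metric.infDist_eq_iInf]
    simp only [dist_eq_norm]
    exact ((Submodule.norm_eq_iInf_iff_real_inner_eq_zero K hgK).2 horthK).symm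
  have hnorm : ‖f₀ - g‖ ^ 2 = (1 + T)⁻¹ := by
    rw [← real_inner_self_eq_norm_sq]
    have h1 : ⟪f₀ - g, f₀ - g⟫ = ⟪f₀ - g, f₀⟫ - ⟪f₀ - g, g⟫ := inner_sub_right _ _ _
    rw [h1, horthK g hgK, sub_zero, inner_sub_left, h00]
    have : ⟪g, f₀⟫ = ∑ k, c k := by
      rw [hg, sum_inner]
      simp only [real_inner_smul_left]
      rw [Finset.sum_congr rfl fun k _ => by rw [real_inner_comm, h0k k, mul_one]]
    rw [this, hsumc]
    field_simp
    ring
  rw [hdist, hnorm]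
end

section
/- With notation as above (Gram matrix equal to the all-ones matrix with diagonal 1, 1+a₃², …, 1+a_{n+3}²), the vector f₀ lies in the closed linear span of {f_k : k ≥ 3} in the Hilbert space completion if and only if Σ_{k=3}^∞ 1/a_k² = ∞. -/
open scoped RealInnerProductSpace

/-- For an infinite family with `(f₀,f₀) = 1`, `(f_i,f_j) = 1` for `i ≠ j`,
`(f_k,f_k) = 1 + a_k²` (`a_k ≠ 0`), the vector `f₀` lies in the closed linear
span of the `f_k` if and only if `∑ 1/a_k² = ∞`. -/
theorem mem_closed_span_iff_not_summable {H : Type*} [NormedAddCommGroup H]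
    [InnerProductSpace ℝ H] [CompleteSpace H]
    (f₀ : H) (f : ℕ → H) (a : ℕ → ℝ) (ha : ∀ k, a k ≠ 0)
    (h00 : ⟪f₀, f₀⟫ = 1) (h0k : ∀ k, ⟪f₀, f k⟫ = 1)
    (hne : ∀ i j, i ≠ j → ⟪f i, f j⟫ = 1)
    (hkk : ∀ k, ⟪f k, f k⟫ = 1 + (a k) ^ 2) :
    f₀ ∈ closure (Submodule.span ℝ (Set.range f) : Set H) ↔
      ¬ Summable (fun k => ((a k) ^ 2)⁻¹) := by
  have ha2 : ∀ k, (a k) ^ 2 ≠ 0 := fun k => pow_ne_zero 2 (ha k)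
  have hij : ∀ i j, ⟪f i, f j⟫ = 1 + (if i = j then (a i) ^ 2 else 0) := by
    intro i j
    by_cases h : i = j
    · subst h; rw [if_pos rfl, hkk]
    · simp [h, hne i j h]
  -- key norm computation
  have key : ∀ (F : Finset ℕ) (c : ℕ → ℝ),
      ‖f₀ - ∑ k ∈ F, c k • f k‖ ^ 2
        = (1 - ∑ k ∈ F, c k) ^ 2 + ∑ k ∈ F, (c k) ^ 2 * (a k) ^ 2 := by
    intro F c
    have h1 : ⟪f₀, ∑ k ∈ F, c k • f k⟫ = ∑ k ∈ F, c k := by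
      rw [inner_sum]
      simp [real_inner_smul_right, h0k]
    have h2 : ‖∑ k ∈ F, c k • f k‖ ^ 2
        = (∑ k ∈ F, c k) ^ 2 + ∑ k ∈ F, (c k) ^ 2 * (a k) ^ 2 := by
      rw [← real_inner_self_eq_norm_sq, sum_inner]
      have hrow : ∀ i ∈ F, ⟪c i • f i, ∑ k ∈ F, c k • f k⟫
          = c i * (∑ k ∈ F, c k) + (c i) ^ 2 * (a i) ^ 2 := by
        intro i hi
        rw [inner_sum]
        have hterm : ∀ j ∈ F, ⟪c i • f i, c j • f j⟫
            = c i * c j + (if i = j then (c i) ^ 2 * (a i) ^ 2 else 0) := by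
          intro j _
          rw [real_inner_smul_left, real_inner_smul_right, hij]
          by_cases h : i = j
          · subst h; rw [if_pos rfl, if_pos rfl]; ring
          · simp [h]
        rw [Finset.sum_congr rfl hterm, Finset.sum_add_distrib,
          Finset.sum_ite_eq F i (fun j => (c i) ^ 2 * (a i) ^ 2)]
        simp [hi, Finset.mul_sum]
      rw [Finset.sum_congr rfl hrow, Finset.sum_add_distrib, ← Finset.sum_mul]
      ring
    rw [norm_sub_sq_real, h1, h2, ← real_inner_self_eq_norm_sq, h00]
    ring
  constructor
  · -- membership ⇒ not summable
    intro hmem hsum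
    set T : ℝ := ∑' k, ((a k) ^ 2)⁻¹ with hT
    have hTnn : 0 ≤ T := tsum_nonneg fun k => by positivity
    have hT1 : (0:ℝ) < 1 + T := by linarith
    -- every element of the span is at squared distance ≥ (1+T)⁻¹ from f₀
    have hlow : ∀ v ∈ (Submodule.span ℝ (Set.range f) : Set H),
        (1 + T)⁻¹ ≤ ‖f₀ - v‖ ^ 2 := by
      intro v hv
      rw [SetLike.mem_coe, Finsupp.mem_span_range_iff_exists_finsupp] at hv
      obtain ⟨c, hc⟩ := hv
      rw [← hc, Finsupp.sum]
      rw [key c.support (fun k => c k)]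
      set s : ℝ := ∑ k ∈ c.support, c k with hs
      set Q : ℝ := ∑ k ∈ c.support, (c k) ^ 2 * (a k) ^ 2 with hQ
      have hQnn : 0 ≤ Q := Finset.sum_nonneg fun k _ => by positivity
      have hCS : s ^ 2 ≤ Q * T := by
        have h1 : s ^ 2 ≤ Q * ∑ k ∈ c.support, ((a k) ^ 2)⁻¹ := by
          calc s ^ 2 = (∑ k ∈ c.support, (c k * a k) * (a k)⁻¹) ^ 2 := by
                congr 1
                refine Finset.sum_congr rfl fun k _ => ?_
                rw [mul_assoc, mul_inv_cancel₀ (ha k), mul_one]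
            _ ≤ (∑ k ∈ c.support, (c k * a k) ^ 2) *
                  (∑ k ∈ c.support, ((a k)⁻¹) ^ 2) :=
                Finset.sum_mul_sq_le_sq_mul_sq c.support _ _
            _ = Q * ∑ k ∈ c.support, ((a k) ^ 2)⁻¹ := by
                congr 1
                · refine Finset.sum_congr rfl fun k _ => by ring
                · refine Finset.sum_congr rfl fun k _ => by
                    rw [← inv_pow]
        have h2 : ∑ k ∈ c.support, ((a k) ^ 2)⁻¹ ≤ T :=
          Summable.sum_le_tsum c.support (fun k _ => by positivity) hsum
        calc s ^ 2 ≤ Q * ∑ k ∈ c.support, ((a k) ^ 2)⁻¹ := h1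
          _ ≤ Q * T := mul_le_mul_of_nonneg_left h2 hQnn
      -- (1-s)^2 + Q ≥ (1+T)⁻¹
      rw [inv_le_iff_one_le_mul₀ hT1]
      rcases eq_or_lt_of_le hTnn with hT0 | hT0
      · have hs0 : s = 0 := by nlinarith
        rw [← hT0, hs0]; nlinarith
      · nlinarith [sq_nonneg ((1 - s) * T - s), hCS, hT0, hQnn,
          mul_le_mul_of_nonneg_right hCS hT0.le]
    -- but f₀ is in the closure, contradiction
    have h0 : (0:ℝ) < (1 + T)⁻¹ := by positivity
    rw [Metric.mem_closure_iff] at hmem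
    obtain ⟨v, hv, hvd⟩ := hmem (Real.sqrt ((1 + T)⁻¹)) (Real.sqrt_pos.2 h0)
    have := hlow v hv
    rw [dist_eq_norm] at hvd
    have h1 : ‖f₀ - v‖ ^ 2 < (1 + T)⁻¹ := by
      have := Real.sq_sqrt h0.le
      nlinarith [norm_nonneg (f₀ - v), Real.sqrt_nonneg ((1 + T)⁻¹)]
    linarith
  · -- not summable ⇒ membership
    intro hns
    set S : ℕ → ℝ := fun n => ∑ k ∈ Finset.range n, ((a k) ^ 2)⁻¹ with hSdef
    have hSnn : ∀ n, 0 ≤ S n := fun n => Finset.sum_nonneg fun k _ => by positivity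
    have hS1 : ∀ n, (0:ℝ) < 1 + S n := fun n => by linarith [hSnn n]
    have hStend : Filter.Tendsto S Filter.atTop Filter.atTop := by
      refine (not_summable_iff_tendsto_nat_atTop_of_nonneg
        (fun k => by positivity)).1 hns
    set v : ℕ → H := fun n =>
      ∑ k ∈ Finset.range n, (((a k) ^ 2)⁻¹ / (1 + S n)) • f k with hvdef
    have hvmem : ∀ n, v n ∈ (Submodule.span ℝ (Set.range f) : Set H) := by
      intro n
      exact Submodule.sum_mem _ fun k _ =>
        Submodule.smul_mem _ _ (Submodule.subset_span ⟨k, rfl⟩)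
    have hdist : ∀ n, ‖f₀ - v n‖ ^ 2 = (1 + S n)⁻¹ := by
      intro n
      rw [hvdef]
      rw [key (Finset.range n) (fun k => ((a k) ^ 2)⁻¹ / (1 + S n))]
      have e1 : ∑ k ∈ Finset.range n, ((a k) ^ 2)⁻¹ / (1 + S n)
          = S n / (1 + S n) := by rw [← Finset.sum_div]
      have e2 : ∑ k ∈ Finset.range n,
          (((a k) ^ 2)⁻¹ / (1 + S n)) ^ 2 * (a k) ^ 2
          = S n / (1 + S n) ^ 2 := by
        have hterm : ∀ k ∈ Finset.range n,
            (((a k) ^ 2)⁻¹ / (1 + S n)) ^ 2 * (a k) ^ 2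
              = ((a k) ^ 2)⁻¹ / (1 + S n) ^ 2 := by
          intro k _
          have hA := ha2 k
          have hB := (hS1 n).ne'
          field_simp
        rw [Finset.sum_congr rfl hterm, ← Finset.sum_div]
      rw [e1, e2]
      have hB := (hS1 n).ne'
      field_simp
      ring
    have htend : Filter.Tendsto (fun n => dist (v n) f₀) Filter.atTop (nhds 0) := by
      have h1 : Filter.Tendsto (fun n => (1 + S n)⁻¹) Filter.atTop (nhds 0) := by
        refine Filter.Tendsto.inv_tendsto_atTop ?_
        exact Filter.tendsto_atTop_add_const_left _ 1 hStend
      have h2 : Filter.Tendsto (fun n => ‖f₀ - v n‖ ^ 2) Filter.atTop (nhds 0) := by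
        simpa [hdist] using h1
      have h3 : Filter.Tendsto (fun n => ‖f₀ - v n‖) Filter.atTop (nhds 0) := by
        have := h2.sqrt
        simpa [Real.sqrt_sq (norm_nonneg _), Real.sqrt_zero] using this
      simpa [dist_eq_norm, norm_sub_rev] using h3
    exact mem_closure_of_tendsto (tendsto_iff_dist_tendsto_zero.2 htend)
      (Filter.Eventually.of_forall hvmem)
end

section
/- Let f₀, f₁, …, f_m be sequences of reals (vectors indexed by ℕ) such that no nontrivial real linear combination Σ_{r=0}^m C_r f_r lies in ℓ²(ℕ). Denote by f_r^{(n)} ∈ ℝⁿ the truncation to the first n coordinates. Then for every s with 0 ≤ s ≤ m, the ratio of Gram determinants Γ(f₀^{(n)}, …, f_m^{(n)}) / Γ(f₀^{(n)}, …, f̂_s^{(n)}, …, f_m^{(n)}) tends to infinity as n → ∞ (where f̂_s means f_s is omitted). -/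
open Filter Finset Matrix Topology

section Aux

variable {m : ℕ} (f : Fin (m + 1) → ℕ → ℝ)

private lemma dot_gram {ι : Type*} [Fintype ι] (g : ι → ℕ → ℝ) (n : ℕ) (C : ι → ℝ) :
    C ⬝ᵥ ((Matrix.of fun i j => ∑ k ∈ Finset.range n, g i k * g j k) *ᵥ C)
      = ∑ k ∈ Finset.range n, (∑ r, C r * g r k) ^ 2 := by
  simp only [Matrix.mulVec, Matrix.of_apply, dotProduct, Finset.mul_sum, Finset.sum_mul, sq]
  rw [show (∑ x : ι, ∑ x_1 : ι, ∑ i ∈ range n, C x * (g x i * g x_1 i * C x_1))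
      = ∑ x : ι, ∑ i ∈ range n, ∑ x_1 : ι, C x * (g x i * g x_1 i * C x_1) from
    Finset.sum_congr rfl fun x _ => Finset.sum_comm, Finset.sum_comm]
  refine Finset.sum_congr rfl fun k _ => ?_
  refine Finset.sum_congr rfl fun i _ => ?_
  refine Finset.sum_congr rfl fun j _ => ?_
  ring

/-- The truncated quadratic form. -/
private def q (n : ℕ) (C : Fin (m + 1) → ℝ) : ℝ :=
  ∑ k ∈ Finset.range n, (∑ r, C r * f r k) ^ 2

private lemma q_nonneg (n : ℕ) (C : Fin (m + 1) → ℝ) : 0 ≤ q f n C :=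
  Finset.sum_nonneg fun _ _ => sq_nonneg _

private lemma q_mono {n n' : ℕ} (h : n ≤ n') (C : Fin (m + 1) → ℝ) : q f n C ≤ q f n' C :=
  Finset.sum_le_sum_of_subset_of_nonneg (Finset.range_subset_range.2 h) fun _ _ _ => sq_nonneg _

private lemma q_smul (n : ℕ) (t : ℝ) (C : Fin (m + 1) → ℝ) :
    q f n (t • C) = t ^ 2 * q f n C := by
  unfold q
  rw [Finset.mul_sum]
  refine Finset.sum_congr rfl fun k _ => ?_
  rw [show ∑ r, (t • C) r * f r k = t * ∑ r, C r * f r k by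
    rw [Finset.mul_sum]; exact Finset.sum_congr rfl fun r _ => by simp [mul_assoc]]
  ring

private lemma q_continuous (n : ℕ) : Continuous fun C : Fin (m + 1) → ℝ => q f n C := by
  unfold q
  exact continuous_finset_sum _ fun k _ =>
    (continuous_finset_sum _ fun r _ => (continuous_apply r).mul continuous_const).pow 2

/-- Key compactness lemma: there is no sequence of unit vectors `D j` with
`q j (D j)` uniformly bounded. -/
private lemma sphere_lemma
    (hf : ∀ C : Fin (m + 1) → ℝ, C ≠ 0 → ¬ Summable (fun k => (∑ r, C r * f r k) ^ 2))
    (M : ℝ) (D : ℕ → Fin (m + 1) → ℝ) (hD : ∀ j, ‖D j‖ = 1)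
    (hq : ∀ j, q f j (D j) ≤ M) : False := by
  obtain ⟨x, hx, φ, hφ, hconv⟩ := (isCompact_sphere (0 : Fin (m + 1) → ℝ) 1).tendsto_subseq
    (fun j => mem_sphere_zero_iff_norm.2 (hD j))
  have hx1 : ‖x‖ = 1 := mem_sphere_zero_iff_norm.1 hx
  have hx0 : x ≠ 0 := by intro h; rw [h, norm_zero] at hx1; exact one_ne_zero hx1.symm
  refine hf x hx0 (summable_of_sum_range_le (c := M) (fun k => sq_nonneg _) fun K => ?_)
  have hT : Tendsto (fun j => q f K (D (φ j))) atTop (𝓝 (q f K x)) :=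
    ((q_continuous f K).tendsto x).comp hconv
  exact le_of_tendsto hT (eventually_atTop.2
    ⟨K, fun j hj => le_trans (q_mono f (hj.trans hφ.le_apply) _) (hq (φ j))⟩)

end Aux

/-- If no nontrivial linear combination of the sequences `f₀, …, f_m` is in
`ℓ²(ℕ)`, then for every `s` the ratio of truncated Gram determinants
`Γ(f₀⁽ⁿ⁾, …, f_m⁽ⁿ⁾) / Γ(f₀⁽ⁿ⁾, …, f̂_s⁽ⁿ⁾, …, f_m⁽ⁿ⁾)` tends to infinity. -/
theorem gram_ratio_tendsto_atTop (m : ℕ) (f : Fin (m + 1) → ℕ → ℝ)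
    (hf : ∀ C : Fin (m + 1) → ℝ, C ≠ 0 →
      ¬ Summable (fun k => (∑ r, C r * f r k) ^ 2))
    (s : Fin (m + 1)) :
    Tendsto (fun n =>
        (Matrix.of fun i j : Fin (m + 1) =>
            ∑ k ∈ Finset.range n, f i k * f j k).det /
          (Matrix.of fun i j : Fin m =>
            ∑ k ∈ Finset.range n, f (s.succAbove i) k * f (s.succAbove j) k).det)
      atTop atTop := by
  classical
  set A : ℕ → Matrix (Fin (m + 1)) (Fin (m + 1)) ℝ :=
    fun n => Matrix.of fun i j => ∑ k ∈ Finset.range n, f i k * f j k with hA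
  set B : ℕ → Matrix (Fin m) (Fin m) ℝ :=
    fun n => Matrix.of fun i j => ∑ k ∈ Finset.range n, f (s.succAbove i) k * f (s.succAbove j) k
    with hBdef
  -- symmetry of A
  have hA_symm : ∀ n (i j : Fin (m + 1)), A n i j = A n j i := by
    intro n i j
    simp only [hA, Matrix.of_apply]
    exact Finset.sum_congr rfl fun k _ => mul_comm _ _
  -- the quadratic form of B
  have hB_form : ∀ n (c : Fin m → ℝ), c ⬝ᵥ (B n *ᵥ c) = q f n (s.insertNth 0 c) := by
    intro n c
    rw [hBdef, dot_gram]
    unfold q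
    refine Finset.sum_congr rfl fun k _ => ?_
    congr 1
    have := Fin.sum_univ_succAbove (fun r => (s.insertNth 0 c : Fin (m+1) → ℝ) r * f r k) s
    rw [this]
    simp
  -- B n is hermitian
  have hB_herm : ∀ n, (B n).IsHermitian := by
    intro n
    ext i j
    simp only [Matrix.conjTranspose_apply, star_trivial, hBdef, Matrix.of_apply]
    exact Finset.sum_congr rfl fun k _ => mul_comm _ _
  -- insertNth of a nonzero vector is nonzero
  have hins_ne : ∀ c : Fin m → ℝ, c ≠ 0 → (s.insertNth 0 c : Fin (m+1) → ℝ) ≠ 0 := by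
    intro c hc h
    refine hc (funext fun i => ?_)
    have := congrFun h (s.succAbove i)
    simpa [Fin.insertNth_apply_succAbove] using this
  -- eventually B n is positive definite
  have hBpos : ∃ N, ∀ n, N ≤ n → (B n).PosDef := by
    by_contra hcon
    push_neg at hcon
    have key : ∀ j : ℕ, ∃ D : Fin (m + 1) → ℝ, ‖D‖ = 1 ∧ q f j D ≤ 0 := by
      intro j
      obtain ⟨n, hn, hnpd⟩ := hcon j
      have hex : ∃ c : Fin m → ℝ, c ≠ 0 ∧ c ⬝ᵥ (B n *ᵥ c) ≤ 0 := by
        by_contra h2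
        push_neg at h2
        exact hnpd (Matrix.PosDef.of_dotProduct_mulVec_pos (hB_herm n) fun x hx => by simpa using h2 x hx)
      obtain ⟨c, hc0, hcle⟩ := hex
      have hEne : (s.insertNth 0 c : Fin (m+1) → ℝ) ≠ 0 := hins_ne c hc0
      have hEnorm : ‖(s.insertNth 0 c : Fin (m+1) → ℝ)‖ ≠ 0 := norm_ne_zero_iff.2 hEne
      refine ⟨‖(s.insertNth 0 c : Fin (m+1) → ℝ)‖⁻¹ • (s.insertNth 0 c : Fin (m+1) → ℝ), ?_, ?_⟩
      · rw [norm_smul, norm_inv, norm_norm, inv_mul_cancel₀ hEnorm]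
      · rw [q_smul]
        have h1 : q f n ((s.insertNth 0 c : Fin (m+1) → ℝ)) ≤ 0 := by rw [← hB_form]; exact hcle
        have h2 : q f j ((s.insertNth 0 c : Fin (m+1) → ℝ)) ≤ 0 := le_trans (q_mono f hn _) h1
        have := mul_le_mul_of_nonneg_left h2 (sq_nonneg ‖(s.insertNth 0 c : Fin (m+1) → ℝ)‖⁻¹)
        simpa using this
    choose D hD1 hD2 using key
    exact sphere_lemma f hf 0 D hD1 hD2
  obtain ⟨N₀, hN₀⟩ := hBpos
  -- main identity: when B n is posdef, the Gram ratio is attained by the form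
  have hmain : ∀ n, (B n).PosDef →
      ∃ C : Fin (m + 1) → ℝ, C s = 1 ∧ q f n C = (A n).det / (B n).det := by
    intro n hpd
    have hdetB : (B n).det ≠ 0 := ne_of_gt hpd.det_pos
    have hunit : IsUnit (B n).det := isUnit_iff_ne_zero.2 hdetB
    haveI : Invertible (B n) := (B n).invertibleOfIsUnitDet hunit
    set w : Fin m → ℝ := fun i => A n (s.succAbove i) s with hw
    set cstar : Fin m → ℝ := -((B n)⁻¹ *ᵥ w) with hcstar
    set C : Fin (m + 1) → ℝ := s.insertNth 1 cstar with hC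
    set e : Fin m ⊕ Unit ≃ Fin (m + 1) :=
      (Equiv.optionEquivSumPUnit (Fin m)).symm.trans (finSuccEquiv' s).symm with he
    have he1 : ∀ i : Fin m, e (Sum.inl i) = s.succAbove i := fun i => by
      simp [he, finSuccEquiv'_symm_some]
    have he2 : ∀ u : Unit, e (Sum.inr u) = s := fun u => by
      simp [he, finSuccEquiv'_symm_none]
    set w₁ : Matrix (Fin m) Unit ℝ := Matrix.of fun i _ => A n (s.succAbove i) s with hw₁
    set w₂ : Matrix Unit (Fin m) ℝ := Matrix.of fun _ j => A n s (s.succAbove j) with hw₂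
    set a : Matrix Unit Unit ℝ := Matrix.of fun _ _ => A n s s with ha
    have hblocks : (A n).submatrix e e = Matrix.fromBlocks (B n) w₁ w₂ a := by
      ext i j
      cases i <;> cases j <;>
        simp [Matrix.submatrix_apply, he1, he2, hw₁, hw₂, ha, hBdef, hA]
    have hdet : (A n).det = (B n).det * (A n s s - w ⬝ᵥ ((B n)⁻¹ *ᵥ w)) := by
      rw [← Matrix.det_submatrix_equiv_self e (A n), hblocks,
        Matrix.det_fromBlocks₁₁, Matrix.invOf_eq_nonsing_inv]
      congr 1
      rw [Matrix.det_unique]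
      have hent : (w₂ * (B n)⁻¹ * w₁) default default = w ⬝ᵥ ((B n)⁻¹ *ᵥ w) := by
        simp only [Matrix.mul_apply, dotProduct, Matrix.mulVec, hw₁, hw₂, Matrix.of_apply,
          Finset.sum_mul, Finset.mul_sum]
        rw [Finset.sum_comm]
        refine Finset.sum_congr rfl fun i _ => Finset.sum_congr rfl fun j _ => ?_
        rw [hw, hA_symm n s (s.succAbove i)]
        ring
      simp only [Matrix.sub_apply, ha, Matrix.of_apply, hent]
    have hBc : B n *ᵥ cstar = -w := by
      have h1 : B n *ᵥ ((B n)⁻¹ *ᵥ w) = w := by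
        rw [Matrix.mulVec_mulVec, Matrix.mul_nonsing_inv _ hunit, Matrix.one_mulVec]
      rw [hcstar, Matrix.mulVec_neg, h1]
    have hCs : C s = 1 := by rw [hC]; simp
    have hCsa : ∀ i, C (s.succAbove i) = cstar i := by
      intro i; rw [hC]; simp
    have hv : ∀ i : Fin m, (A n *ᵥ C) (s.succAbove i) = 0 := by
      intro i
      have expand : (A n *ᵥ C) (s.succAbove i)
          = A n (s.succAbove i) s * C s
            + ∑ j, A n (s.succAbove i) (s.succAbove j) * C (s.succAbove j) := by
        rw [Matrix.mulVec, dotProduct,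
          Fin.sum_univ_succAbove (fun r => A n (s.succAbove i) r * C r) s]
      rw [expand, hCs, mul_one]
      have hsum : ∑ j, A n (s.succAbove i) (s.succAbove j) * C (s.succAbove j)
          = (B n *ᵥ cstar) i := by
        rw [Matrix.mulVec, dotProduct]
        refine Finset.sum_congr rfl fun j _ => ?_
        rw [hCsa j]
        congr 1
      rw [hsum, hBc]
      simp [hw]
    have hqC : q f n C = A n s s - w ⬝ᵥ ((B n)⁻¹ *ᵥ w) := by
      have hq_eq : q f n C = C ⬝ᵥ (A n *ᵥ C) := by
        unfold q
        rw [hA]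
        exact (dot_gram f n C).symm
      rw [hq_eq, dotProduct, Fin.sum_univ_succAbove (fun r => C r * (A n *ᵥ C) r) s]
      have hz : ∑ i, C (s.succAbove i) * (A n *ᵥ C) (s.succAbove i) = 0 := by
        refine Finset.sum_eq_zero fun i _ => ?_
        rw [hv i, mul_zero]
      rw [hz, add_zero, hCs, one_mul, Matrix.mulVec, dotProduct,
        Fin.sum_univ_succAbove (fun r => A n s r * C r) s, hCs, mul_one]
      have hsum2 : ∑ j, A n s (s.succAbove j) * C (s.succAbove j)
          = -(w ⬝ᵥ ((B n)⁻¹ *ᵥ w)) := by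
        rw [dotProduct, ← Finset.sum_neg_distrib]
        refine Finset.sum_congr rfl fun j _ => ?_
        rw [hCsa j, hcstar, hA_symm n s (s.succAbove j)]
        simp only [Pi.neg_apply, hw]
        ring
      rw [hsum2, ← sub_eq_add_neg]
    exact ⟨C, hCs, by rw [hqC, hdet, mul_div_cancel_left₀ _ hdetB]⟩
  -- conclusion by contradiction via the compactness lemma
  by_contra hcon
  rw [Filter.tendsto_atTop] at hcon
  push_neg at hcon
  obtain ⟨M, hM⟩ := hcon
  have hfreq : ∃ᶠ n in atTop, (A n).det / (B n).det < M ∧ N₀ ≤ n :=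
    hM.and_eventually (eventually_ge_atTop N₀)
  obtain ⟨φ, hφ, hP⟩ := Filter.extraction_of_frequently_atTop hfreq
  choose Cj hCj1 hCj2 using fun j : ℕ => hmain (φ j) (hN₀ _ (hP j).2)
  set M' := max M 0 with hM'
  have hnorm1 : ∀ j, 1 ≤ ‖Cj j‖ := by
    intro j
    have h := norm_le_pi_norm (Cj j) s
    rw [hCj1 j] at h
    simpa using h
  have hDnorm : ∀ j, ‖(‖Cj j‖)⁻¹ • Cj j‖ = 1 := by
    intro j
    have hne : ‖Cj j‖ ≠ 0 := by linarith [hnorm1 j]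
    rw [norm_smul, norm_inv, norm_norm, inv_mul_cancel₀ hne]
  have hDj : ∀ j, q f j ((‖Cj j‖)⁻¹ • Cj j) ≤ M' := by
    intro j
    have h1 : q f (φ j) (Cj j) < M := by rw [hCj2 j]; exact (hP j).1
    have ht : (‖Cj j‖⁻¹) ^ 2 ≤ 1 := by
      have h2 : ‖Cj j‖⁻¹ ≤ 1 := by
        rw [inv_le_one_iff₀]
        right; exact hnorm1 j
      have h3 : (0:ℝ) ≤ ‖Cj j‖⁻¹ := inv_nonneg.2 (norm_nonneg _)
      nlinarith
    calc q f j ((‖Cj j‖)⁻¹ • Cj j) ≤ q f (φ j) ((‖Cj j‖)⁻¹ • Cj j) :=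
          q_mono f hφ.le_apply _
      _ = (‖Cj j‖⁻¹) ^ 2 * q f (φ j) (Cj j) := q_smul f (φ j) _ _
      _ ≤ 1 * q f (φ j) (Cj j) := mul_le_mul_of_nonneg_right ht (q_nonneg f _ _)
      _ = q f (φ j) (Cj j) := one_mul _
      _ ≤ M' := le_trans h1.le (le_max_left _ _)
  exact sphere_lemma f hf M' _ hDnorm hDj
end

section
/- Let f₀, …, f_m be real sequences such that no nontrivial linear combination lies in ℓ²(ℕ). Then for each s, 0 ≤ s ≤ m, the ratio det(I_{m+1} + γ(f₀^{(n)}, …, f_m^{(n)})) / det(I_m + γ(f₀^{(n)}, …, f̂_s^{(n)}, …, f_m^{(n)})) tends to infinity as n → ∞, where γ denotes the Gram matrix of the truncated vectors and f̂_s means f_s is omitted. -/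
open Filter Matrix

lemma quad_eq {ι : Type*} [Fintype ι] (g : ι → ℕ → ℝ) (n : ℕ) (x : ι → ℝ) :
    x ⬝ᵥ (Matrix.of fun i j => ∑ k ∈ Finset.range n, g i k * g j k : Matrix ι ι ℝ).mulVec x
      = ∑ k ∈ Finset.range n, (∑ r, x r * g r k) ^ 2 := by
  simp only [dotProduct, Matrix.mulVec, Matrix.of_apply, Finset.sum_mul, Finset.mul_sum, sq]
  rw [Finset.sum_comm (γ := ℕ)]
  refine Finset.sum_congr rfl fun k _ => ?_
  rw [Finset.sum_comm]
  refine Finset.sum_congr rfl fun i _ => Finset.sum_congr rfl fun j _ => by ring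

lemma posdef_one_add_gram {ι : Type*} [Fintype ι] [DecidableEq ι] (g : ι → ℕ → ℝ) (n : ℕ) :
    (1 + Matrix.of fun i j => ∑ k ∈ Finset.range n, g i k * g j k : Matrix ι ι ℝ).PosDef := by
  refine PosDef.of_dotProduct_mulVec_pos ?_ ?_
  · refine IsHermitian.add isHermitian_one ?_
    refine IsHermitian.ext fun i j => ?_
    simp only [Matrix.of_apply, conjTranspose_apply, star_trivial]
    exact Finset.sum_congr rfl fun k _ => mul_comm _ _
  · intro x hx
    have : star x = x := by simp
    rw [this, add_mulVec, dotProduct_add, one_mulVec, quad_eq]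
    have h1 : 0 < x ⬝ᵥ x := by
      have := (dotProduct_self_star_pos_iff (v := x)).2 hx
      simpa using this
    have h2 : 0 ≤ ∑ k ∈ Finset.range n, (∑ r, x r * g r k) ^ 2 :=
      Finset.sum_nonneg fun k _ => sq_nonneg _
    linarith

lemma exists_quad_det {m : ℕ} (A : Matrix (Fin (m+1)) (Fin (m+1)) ℝ) (s : Fin (m+1))
    (hB : IsUnit (A.submatrix s.succAbove s.succAbove).det) :
    ∃ x : Fin (m+1) → ℝ, x s = 1 ∧
      A.det = (x ⬝ᵥ A.mulVec x) * (A.submatrix s.succAbove s.succAbove).det := by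
  classical
  set B := A.submatrix s.succAbove s.succAbove with hBdef
  set e : Fin m ⊕ Unit ≃ Fin (m+1) :=
    ((finSuccEquiv' s).trans (Equiv.optionEquivSumPUnit _)).symm with he
  have hel : ∀ j, e (Sum.inl j) = s.succAbove j := fun j => rfl
  have her : ∀ u, e (Sum.inr u) = s := fun u => rfl
  set bv : Fin m → ℝ := fun i => A (s.succAbove i) s with hbv
  set b : Matrix (Fin m) Unit ℝ := Matrix.of fun i _ => A (s.succAbove i) s with hb
  set c : Matrix Unit (Fin m) ℝ := Matrix.of fun _ j => A s (s.succAbove j) with hc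
  set d : Matrix Unit Unit ℝ := Matrix.of fun _ _ => A s s with hd
  have hsub : A.submatrix e e = fromBlocks B b c d := by
    ext i j
    cases i <;> cases j <;>
      simp [fromBlocks, hel, her, submatrix_apply, hb, hc, hd, hBdef]
  haveI : Invertible B := A.submatrix s.succAbove s.succAbove |>.invertibleOfIsUnitDet hB
  set y : Fin m → ℝ := -(B⁻¹ *ᵥ bv) with hy
  set u : Fin m ⊕ Unit → ℝ := Sum.elim y (fun _ => 1) with hu
  refine ⟨u ∘ e.symm, ?_, ?_⟩
  · have h : e.symm s = Sum.inr () := by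
      rw [Equiv.symm_apply_eq, her]
    simp [h, hu]
  have hBy : B *ᵥ y = -bv := by
    rw [hy, mulVec_neg, mulVec_mulVec, Matrix.mul_nonsing_inv _ hB, one_mulVec]
  have hbone : b *ᵥ (fun _ : Unit => (1:ℝ)) = bv := by
    funext i
    simp [hb, mulVec, dotProduct, hbv]
  have key : u ⬝ᵥ (A.submatrix e e) *ᵥ u = (u ∘ e.symm) ⬝ᵥ A *ᵥ (u ∘ e.symm) := by
    calc u ⬝ᵥ (A.submatrix e e) *ᵥ u
        = ((u ∘ e.symm) ∘ e) ⬝ᵥ ((A *ᵥ (u ∘ e.symm)) ∘ e) := by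
          rw [submatrix_mulVec_equiv]
          congr 1
          funext i; simp
      _ = (u ∘ e.symm) ⬝ᵥ A *ᵥ (u ∘ e.symm) := comp_equiv_dotProduct_comp_equiv _ _ _
  have hquad : (u ∘ e.symm) ⬝ᵥ A *ᵥ (u ∘ e.symm) = (d - c * B⁻¹ * b) default default := by
    rw [← key, hsub, hu, fromBlocks_mulVec]
    simp only [Sum.elim_comp_inl, Sum.elim_comp_inr]
    rw [sumElim_dotProduct_sumElim, hBy, hbone]
    have h1 : y ⬝ᵥ (-bv + bv) = 0 := by simp
    rw [h1, zero_add]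
    have h2 : c *ᵥ y = -((c * B⁻¹) *ᵥ bv) := by
      rw [hy, mulVec_neg, mulVec_mulVec]
    rw [h2]
    have h3 : ((c * B⁻¹) *ᵥ bv) default = (c * B⁻¹ * b) default default := by
      simp [mulVec, dotProduct, Matrix.mul_apply, hb, hbv]
    have h4 : (d *ᵥ fun _ : Unit => (1:ℝ)) default = d default default := by
      simp [mulVec, dotProduct]
    rw [dotProduct, Fintype.sum_unique]
    simp only [Pi.add_apply, Pi.neg_apply, one_mul, Matrix.sub_apply]
    rw [h3, h4]
    ring
  rw [hquad]
  have hdet : A.det = (A.submatrix e e).det := (det_submatrix_equiv_self e A).symm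
  rw [hdet, hsub, det_fromBlocks₁₁, invOf_eq_nonsing_inv,
    det_unique (d - c * B⁻¹ * b), mul_comm]

lemma eventually_quad_lower {m : ℕ} (f : Fin (m + 1) → ℕ → ℝ)
    (hf : ∀ C : Fin (m + 1) → ℝ, C ≠ 0 → ¬ Summable (fun k => (∑ r, C r * f r k) ^ 2))
    (s : Fin (m + 1)) (M : ℝ) :
    ∃ N, ∀ n, N ≤ n → ∀ x : Fin (m+1) → ℝ, x s = 1 →
      M ≤ ∑ i, x i ^ 2 + ∑ k ∈ Finset.range n, (∑ r, x r * f r k) ^ 2 := by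
  by_contra hcon
  push_neg at hcon
  -- extract a sequence
  have hX : ∀ N : ℕ, ∃ x : Fin (m+1) → ℝ, x s = 1 ∧
      (∑ i, x i ^ 2) + ∑ k ∈ Finset.range N, (∑ r, x r * f r k) ^ 2 < M := by
    intro N
    obtain ⟨n, hn, x, hxs, hlt⟩ := hcon N
    refine ⟨x, hxs, lt_of_le_of_lt ?_ hlt⟩
    gcongr
  choose X hXs hXlt using hX
  have hsumsq : ∀ N, ∑ i, X N i ^ 2 ≤ M := fun N => by
    have := hXlt N
    have h2 : 0 ≤ ∑ k ∈ Finset.range N, (∑ r, X N r * f r k) ^ 2 :=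
      Finset.sum_nonneg fun k _ => sq_nonneg _
    linarith
  have hpart : ∀ K N, K ≤ N →
      ∑ k ∈ Finset.range K, (∑ r, X N r * f r k) ^ 2 ≤ M := by
    intro K N hK
    have h1 : 0 ≤ ∑ i, X N i ^ 2 := Finset.sum_nonneg fun i _ => sq_nonneg _
    have h3 : ∑ k ∈ Finset.range K, (∑ r, X N r * f r k) ^ 2
        ≤ ∑ k ∈ Finset.range N, (∑ r, X N r * f r k) ^ 2 :=
      Finset.sum_le_sum_of_subset_of_nonneg
        (Finset.range_subset_range.2 hK) (fun k _ _ => sq_nonneg _)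
    have := hXlt N
    linarith
  -- M is nonneg
  have hM0 : 0 ≤ M := by
    have h := hsumsq 0
    have : (1:ℝ) ≤ ∑ i, X 0 i ^ 2 := by
      have : (X 0 s) ^ 2 ≤ ∑ i, X 0 i ^ 2 :=
        Finset.single_le_sum (f := fun i => X 0 i ^ 2)
          (fun i _ => sq_nonneg _) (Finset.mem_univ s)
      rw [hXs 0] at this
      simpa using this
    linarith
  -- compactness
  have hmem : ∀ N, X N ∈ Metric.closedBall (0 : Fin (m+1) → ℝ) (Real.sqrt M) := by
    intro N
    rw [mem_closedBall_zero_iff]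
    rw [pi_norm_le_iff_of_nonneg (Real.sqrt_nonneg M)]
    intro i
    rw [Real.norm_eq_abs, ← Real.sqrt_sq_eq_abs]
    apply Real.sqrt_le_sqrt
    calc X N i ^ 2 ≤ ∑ j, X N j ^ 2 := Finset.single_le_sum (f := fun j => X N j ^ 2)
          (fun j _ => sq_nonneg _) (Finset.mem_univ i)
      _ ≤ M := hsumsq N
  obtain ⟨L, -, φ, hφ, hφt⟩ :=
    (isCompact_closedBall (0 : Fin (m+1) → ℝ) (Real.sqrt M)).tendsto_subseq hmem
  have hLs : L s = 1 := by
    have h1 : Tendsto (fun j => X (φ j) s) atTop (nhds (L s)) :=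
      ((continuous_apply s).tendsto L).comp hφt
    have h2 : (fun j => X (φ j) s) = fun _ => (1:ℝ) := funext fun j => hXs (φ j)
    rw [h2] at h1
    exact (tendsto_nhds_unique tendsto_const_nhds h1).symm
  have hLne : L ≠ 0 := fun h => by simp [h] at hLs
  have hLsum : ∀ K, ∑ k ∈ Finset.range K, (∑ r, L r * f r k) ^ 2 ≤ M := by
    intro K
    have hg : Continuous fun x : Fin (m+1) → ℝ =>
        ∑ k ∈ Finset.range K, (∑ r, x r * f r k) ^ 2 := by
      refine continuous_finset_sum _ fun k _ => ?_
      exact (continuous_finset_sum _ fun r _ =>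
        (continuous_apply r).mul continuous_const).pow 2
    refine le_of_tendsto ((hg.tendsto L).comp hφt) ?_
    filter_upwards [eventually_ge_atTop K] with j hj
    exact hpart K (φ j) (hj.trans (hφ.le_apply))
  have hsummable : Summable fun k => (∑ r, L r * f r k) ^ 2 :=
    summable_of_sum_range_le (fun k => sq_nonneg _) hLsum
  exact hf L hLne hsummable

/-- If no nontrivial linear combination of the sequences `f₀, …, f_m` is in
`ℓ²(ℕ)`, then for every `s` the ratio
`det(I_{m+1} + γ(f₀⁽ⁿ⁾, …, f_m⁽ⁿ⁾)) / det(I_m + γ(f₀⁽ⁿ⁾, …, f̂_s⁽ⁿ⁾, …, f_m⁽ⁿ⁾))`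
tends to infinity. -/
theorem det_one_add_gram_ratio_tendsto_atTop (m : ℕ) (f : Fin (m + 1) → ℕ → ℝ)
    (hf : ∀ C : Fin (m + 1) → ℝ, C ≠ 0 →
      ¬ Summable (fun k => (∑ r, C r * f r k) ^ 2))
    (s : Fin (m + 1)) :
    Tendsto (fun n =>
        (1 + Matrix.of fun i j : Fin (m + 1) =>
            ∑ k ∈ Finset.range n, f i k * f j k : Matrix (Fin (m + 1)) (Fin (m + 1)) ℝ).det /
          (1 + Matrix.of fun i j : Fin m =>
            ∑ k ∈ Finset.range n, f (s.succAbove i) k * f (s.succAbove j) k :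
              Matrix (Fin m) (Fin m) ℝ).det)
      atTop atTop := by
  rw [tendsto_atTop]
  intro b
  obtain ⟨N, hN⟩ := eventually_quad_lower f hf s b
  rw [eventually_atTop]
  refine ⟨N, fun n hn => ?_⟩
  set A : Matrix (Fin (m + 1)) (Fin (m + 1)) ℝ :=
    1 + Matrix.of fun i j : Fin (m + 1) => ∑ k ∈ Finset.range n, f i k * f j k with hA
  set Bm : Matrix (Fin m) (Fin m) ℝ :=
    1 + Matrix.of fun i j : Fin m =>
      ∑ k ∈ Finset.range n, f (s.succAbove i) k * f (s.succAbove j) k with hBm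
  have hsub : A.submatrix s.succAbove s.succAbove = Bm := by
    ext i j
    simp only [hA, hBm, Matrix.submatrix_apply, Matrix.add_apply, Matrix.of_apply,
      Matrix.one_apply, (Fin.succAbove_right_injective (p := s)).eq_iff]
  have hBpos : Bm.PosDef := posdef_one_add_gram (fun i => f (s.succAbove i)) n
  have hBdet : 0 < Bm.det := hBpos.det_pos
  obtain ⟨x, hxs, hxdet⟩ := exists_quad_det A s
    (by rw [hsub]; exact isUnit_iff_ne_zero.2 hBdet.ne')
  rw [hsub] at hxdet
  have hquad : x ⬝ᵥ A.mulVec x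
      = ∑ i, x i ^ 2 + ∑ k ∈ Finset.range n, (∑ r, x r * f r k) ^ 2 := by
    rw [hA, Matrix.add_mulVec, dotProduct_add, Matrix.one_mulVec, quad_eq]
    congr 1
    simp [dotProduct, sq]
  have hb : b ≤ x ⬝ᵥ A.mulVec x := by
    rw [hquad]; exact hN n hn x hxs
  rw [hxdet, mul_div_assoc, div_self hBdet.ne', mul_one]
  exact hb
end

section
/- Let g₁,…,gₙ ∈ ℂ^{m−1}, a ∈ ℂⁿ, λ ∈ ℂⁿ with all λ_k ≠ 0, and let C = γ(g₁,…,gₙ) be the Gram matrix (g_i, g_j) (bilinear pairing). Assume C(λ) = C + diag(λ) is invertible. Form the m×n matrix X with first row x_{1k} = a_k/√λ_k and remaining rows x_{rk} = (g_k)_{r−1}/√λ_k, and let y₁,…,y_m ∈ ℂⁿ be the rows of X. Then 1 + (C(λ)⁻¹ a, a) = det(I_m + γ(y₁,…,y_m)) / det(I_{m−1} + γ(y₂,…,y_m)). -/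
open Matrix

/-- For the Gram matrix `C = γ(g₁,…,gₙ)` (bilinear pairing) and `C(λ) = C + diag λ`
invertible, with `X` the `m × n` matrix whose first row is `a_k/√λ_k` and whose
remaining rows are `(g_k)_r/√λ_k`, one has
`1 + (C(λ)⁻¹ a, a) = det(I_m + γ(y₁,…,y_m)) / det(I_{m-1} + γ(y₂,…,y_m))`,
where `y₁,…,y_m` are the rows of `X`. -/
theorem one_add_quadratic_eq_gram_ratio (m n : ℕ) (g : Fin n → Fin m → ℂ)
    (a l sl : Fin n → ℂ) (hsl : ∀ k, sl k ^ 2 = l k) (hl : ∀ k, l k ≠ 0)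
    (C : Matrix (Fin n) (Fin n) ℂ) (hC : C = Matrix.of fun i j => ∑ r, g i r * g j r)
    (hinv : IsUnit (C + Matrix.diagonal l).det)
    (X : Matrix (Fin (m + 1)) (Fin n) ℂ)
    (hX : X = Matrix.of (Fin.cons (fun k => a k / sl k) (fun r k => g k r / sl k)))
    (X' : Matrix (Fin m) (Fin n) ℂ) (hX' : X' = Matrix.of fun r k => g k r / sl k) :
    1 + (C + Matrix.diagonal l)⁻¹.mulVec a ⬝ᵥ a =
      (1 + X * X.transpose).det / (1 + X' * X'.transpose).det := by
  have hsl0 : ∀ k, sl k ≠ 0 := fun k hk => hl k (by rw [← hsl k, hk]; ring)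
  set Cl := C + Matrix.diagonal l with hCl
  have hdetCl : Cl.det ≠ 0 := hinv.ne_zero
  set d : ℂ := ∏ k, sl k with hd
  have hd0 : d ≠ 0 := Finset.prod_ne_zero_iff.2 fun k _ => hsl0 k
  set D := Matrix.diagonal sl with hD
  set E := Matrix.diagonal (fun k => (sl k)⁻¹) with hE
  have hDE : D * E = 1 := by
    rw [hD, hE, Matrix.diagonal_mul_diagonal]
    convert Matrix.diagonal_one
    exact mul_inv_cancel₀ (hsl0 _)
  have hED : E * D = 1 := by
    rw [hD, hE, Matrix.diagonal_mul_diagonal]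
    convert Matrix.diagonal_one
    exact inv_mul_cancel₀ (hsl0 _)
  have hDD : D * D = Matrix.diagonal l := by
    rw [hD, Matrix.diagonal_mul_diagonal]
    have : (fun i => sl i * sl i) = l := funext fun k => by rw [← hsl k]; ring
    rw [this]
  set X₀ : Matrix (Fin (m + 1)) (Fin n) ℂ :=
    Matrix.of (Fin.cons a (fun r k => g k r)) with hX₀
  set X₀' : Matrix (Fin m) (Fin n) ℂ := Matrix.of (fun r k => g k r) with hX₀'
  have hXE : X = X₀ * E := by
    ext r k
    rw [hX, hX₀, hE, Matrix.mul_diagonal]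
    induction r using Fin.cases <;> simp [div_eq_mul_inv]
  have hXE' : X' = X₀' * E := by
    ext r k
    rw [hX', hX₀', hE, Matrix.mul_diagonal]
    simp [div_eq_mul_inv]
  -- conjugation identities
  have hG : X₀.transpose * X₀ = C + Matrix.replicateCol Unit a * Matrix.replicateRow Unit a := by
    ext i j
    simp [hX₀, hC, Matrix.mul_apply, Fin.sum_univ_succ, add_comm]
  have hG' : X₀'.transpose * X₀' = C := by
    ext i j
    simp [hX₀', hC, Matrix.mul_apply]
  have conj : ∀ {p : ℕ} (Y : Matrix (Fin p) (Fin n) ℂ),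
      D * (1 + (Y * E).transpose * (Y * E)) * D
        = Matrix.diagonal l + Y.transpose * Y := by
    intro p Y
    rw [Matrix.transpose_mul, hE, Matrix.diagonal_transpose, ← hE]
    rw [Matrix.mul_add, Matrix.add_mul, Matrix.mul_one, hDD]
    congr 1
    calc D * (E * Y.transpose * (Y * E)) * D
        = (D * E) * (Y.transpose * Y) * (E * D) := by
          simp only [Matrix.mul_assoc]
      _ = Y.transpose * Y := by rw [hDE, hED, Matrix.one_mul, Matrix.mul_one]
  have h1 : D * (1 + X.transpose * X) * D = Cl + Matrix.replicateCol Unit a * Matrix.replicateRow Unit a := by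
    rw [hXE, conj, hG, hCl]
    abel
  have h2 : D * (1 + X'.transpose * X') * D = Cl := by
    rw [hXE', conj, hG', hCl]
    abel
  have hdetD : D.det = d := Matrix.det_diagonal
  have hq : (Cl + Matrix.replicateCol Unit a * Matrix.replicateRow Unit a).det
      = Cl.det * (1 + Cl⁻¹.mulVec a ⬝ᵥ a) := by
    rw [Matrix.det_add_replicateCol_mul_replicateRow hinv]
    congr 1
    rw [Matrix.det_unique, Matrix.add_apply, Matrix.one_apply_eq]
    congr 1
    simp only [Matrix.mul_apply, Matrix.replicateRow_apply, Matrix.replicateCol_apply, Matrix.mulVec,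
      dotProduct, Finset.sum_mul]
    rw [Finset.sum_comm]
    exact Finset.sum_congr rfl fun i _ => Finset.sum_congr rfl fun j _ => by ring
  have e1 : (1 + X * X.transpose).det = Cl.det * (1 + Cl⁻¹.mulVec a ⬝ᵥ a) / (d * d) := by
    rw [Matrix.det_one_add_mul_comm, ← hq, ← h1, Matrix.det_mul, Matrix.det_mul, hdetD]
    field_simp
  have e2 : (1 + X' * X'.transpose).det = Cl.det / (d * d) := by
    rw [Matrix.det_one_add_mul_comm, ← h2, Matrix.det_mul, Matrix.det_mul, hdetD]
    field_simp
  rw [e1, e2]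
  field_simp
end

section
/- For C ∈ Mat(n, ℂ), λ ∈ ℂⁿ with all λ_k ≠ 0 and C(λ) = C + diag(λ) invertible, the inverse is given by C(λ)⁻¹ = (det C(λ))⁻¹ (∏_{k=1}^n λ_k) Σ_{∅≠α⊆{1,…,n}} Aᵀ(C_α)/λ_α, where C_α is the principal submatrix of C on index set α, A(C_α) its adjugate (cofactor) matrix embedded back into Mat(n,ℂ) on the coordinates α with zeros elsewhere, Aᵀ its transpose, and λ_α = ∏_{i∈α} λ_i; here A(C_{k}) is the 1×1 matrix (1) for singletons. -/
/-! Expanding `det (C + diagonal λ)` by multilinearity in the rows writes it as a sum of the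
principal minors `det C_α` weighted by `∏_{k ∉ α} λ_k`. Replacing row `j` of `C + diagonal λ`
by `e_i` amounts to replacing it in `C` and setting `λ_j = 0`, so the same expansion applies to
the cofactors and gives `adjugate (C + diagonal λ) = ∑_α (∏_{k ∉ α} λ_k) Aᵀ(C_α)`. The empty `α`
contributes nothing, and `∏_{k ∉ α} λ_k = (∏_k λ_k) / λ_α`. -/

open Matrix

/-- The `n × n` matrix supported on `α × α` whose `α × α` block is the adjugate
(the transposed cofactor matrix `Aᵀ(C_α)`) of the principal submatrix `C_α`. -/
noncomputable def embedAdjugate {n : ℕ} (C : Matrix (Fin n) (Fin n) ℂ)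
    (α : Finset (Fin n)) : Matrix (Fin n) (Fin n) ℂ :=
  Matrix.of fun i j =>
    if hi : i ∈ α then
      if hj : j ∈ α then
        (C.submatrix (fun i : α => (i : Fin n)) (fun j : α => (j : Fin n))).adjugate
          ⟨i, hi⟩ ⟨j, hj⟩
      else 0
    else 0

namespace Matrix

variable {R n : Type*} [CommRing R] [DecidableEq n]

theorem det_add_diagonal_eq_sum_principal_minors [Fintype n] (M : Matrix n n R) (d : n → R) :
    (M + diagonal d).det =
      ∑ s : Finset n, (∏ i ∈ sᶜ, d i) * (M.submatrix ((↑) : s → n) (↑)).det := by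
  let D := (detRowAlternating : (n → R) [⋀^n]→ₗ[R] R)
  have hrows : (M + diagonal d).row = M.row + fun i => d i • (1 : Matrix n n R).row i := by
    ext i j
    by_cases h : i = j <;> simp [h]
  change D (M + diagonal d).row = _
  rw [hrows, D.map_add_univ]
  refine Finset.sum_congr rfl fun s _ => ?_
  have hscale : s.piecewise M.row (fun i => d i • (1 : Matrix n n R).row i) =
      fun i => (if i ∈ sᶜ then d i else 1) • s.piecewise M.row (1 : Matrix n n R).row i := by
    ext i j
    by_cases hi : i ∈ s <;> simp [hi]
  rw [hscale, D.map_smul_univ, smul_eq_mul, Finset.prod_ite_mem, Finset.univ_inter]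
  exact congrArg _ (det_piecewise_one_eq_submatrix_det M s)

theorem updateRow_add_diagonal (M : Matrix n n R) (d : n → R) (j : n) (v : n → R) :
    (M + diagonal d).updateRow j v = M.updateRow j v + diagonal (Function.update d j 0) := by
  ext a b
  by_cases h : a = j
  · subst h; simp [diagonal_apply]
  · simp [diagonal_apply, h]

theorem det_submatrix_updateRow_single (M : Matrix n n R) {s : Finset n} {i j : n}
    (hj : j ∈ s) :
    ((M.updateRow j (Pi.single i 1)).submatrix ((↑) : s → n) (↑)).det =
      if hi : i ∈ s then (M.submatrix ((↑) : s → n) (↑)).adjugate ⟨i, hi⟩ ⟨j, hj⟩ else 0 := by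
  split_ifs with hi
  · rw [adjugate_apply]
    congr 1
    ext a b
    by_cases h : a = ⟨j, hj⟩
    · subst h; simp [Pi.single_apply, Subtype.ext_iff]
    · have h' : (a : n) ≠ j := fun e => h (Subtype.ext e)
      simp [updateRow_ne h, updateRow_ne h']
  · refine det_eq_zero_of_row_eq_zero ⟨j, hj⟩ fun b => ?_
    have : (b : n) ≠ i := fun e => hi (e ▸ b.2)
    simp [this]

end Matrix

theorem embedAdjugate_empty {n : ℕ} (C : Matrix (Fin n) (Fin n) ℂ) :
    embedAdjugate C ∅ = 0 := by
  ext i j; simp [embedAdjugate]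

theorem adjugate_add_diagonal_eq_sum_embedAdjugate {n : ℕ} (C : Matrix (Fin n) (Fin n) ℂ)
    (l : Fin n → ℂ) :
    (C + diagonal l).adjugate = ∑ α : Finset (Fin n), (∏ k ∈ αᶜ, l k) • embedAdjugate C α := by
  ext i j
  rw [adjugate_apply, updateRow_add_diagonal, det_add_diagonal_eq_sum_principal_minors,
    Matrix.sum_apply]
  refine Finset.sum_congr rfl fun α _ => ?_
  rw [Matrix.smul_apply, smul_eq_mul]
  by_cases hj : j ∈ α
  · have hprod : ∏ k ∈ αᶜ, Function.update l j 0 k = ∏ k ∈ αᶜ, l k :=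
      Finset.prod_congr rfl fun k hk =>
        Function.update_of_ne (by rintro rfl; exact Finset.mem_compl.mp hk hj) 0 l
    rw [hprod, det_submatrix_updateRow_single C hj]
    by_cases hi : i ∈ α <;> simp [embedAdjugate, hi, hj]
  · rw [Finset.prod_eq_zero (Finset.mem_compl.mpr hj) (Function.update_self j 0 l)]
    simp [embedAdjugate, hj]

theorem inv_add_diagonal_eq_sum_adjugates_general (n : ℕ) (C : Matrix (Fin n) (Fin n) ℂ)
    (l : Fin n → ℂ) (hl : ∀ k, l k ≠ 0) :
    (C + Matrix.diagonal l)⁻¹ =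
      ((C + Matrix.diagonal l).det)⁻¹ • (∏ k, l k) •
        ∑ α ∈ Finset.univ.filter (fun α : Finset (Fin n) => α.Nonempty),
          (∏ i ∈ α, l i)⁻¹ • embedAdjugate C α := by
  rw [inv_def, Ring.inverse_eq_inv', adjugate_add_diagonal_eq_sum_embedAdjugate]
  congr 1
  rw [Finset.sum_filter_of_ne fun α _ hα => ?_, Finset.smul_sum]
  · refine Finset.sum_congr rfl fun α _ => ?_
    rw [smul_smul, ← Finset.prod_compl_mul_prod α l,
      mul_inv_cancel_right₀ (Finset.prod_ne_zero_iff.mpr fun k _ => hl k)]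
  · rw [Finset.nonempty_iff_ne_empty]
    rintro rfl
    simp [embedAdjugate_empty] at hα

/-- The generalized resolvent:
`C(λ)⁻¹ = (det C(λ))⁻¹ (∏ λ_k) ∑_{∅ ≠ α} Aᵀ(C_α)/λ_α`. -/
theorem inv_add_diagonal_eq_sum_adjugates (n : ℕ) (C : Matrix (Fin n) (Fin n) ℂ)
    (l : Fin n → ℂ) (hl : ∀ k, l k ≠ 0)
    (hinv : IsUnit (C + Matrix.diagonal l).det) :
    (C + Matrix.diagonal l)⁻¹ =
      ((C + Matrix.diagonal l).det)⁻¹ • (∏ k, l k) •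
        ∑ α ∈ Finset.univ.filter (fun α : Finset (Fin n) => α.Nonempty),
          (∏ i ∈ α, l i)⁻¹ • embedAdjugate C α :=
  inv_add_diagonal_eq_sum_adjugates_general n C l hl
end
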